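/- arXiv:1407.7106 — 3 statements merged into one kernel-verified Lean document; each statement's English description precedes it below -/
import Mathlib

section
/- On ℝ² with coordinates (x,y), the bracket {f,h} = (1−x−e^{−x})(∂_x f ∂_y h − ∂_y f ∂_x h) + h ∂_y f − f ∂_y h satisfies the Jacobi identity {f,{g,h}} + {g,{h,f}} + {h,{f,g}} = 0 for all smooth f,g,h. -/
open scoped BigOperators

/-- Partial derivative in direction `x` (first coordinate) on `ℝ²`. -/
noncomputable def pdx (f : ℝ × ℝ → ℝ) (p : ℝ × ℝ) : ℝ := fderiv ℝ f p (1, 0)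

/-- Partial derivative in direction `y` (second coordinate) on `ℝ²`. -/
noncomputable def pdy (f : ℝ × ℝ → ℝ) (p : ℝ × ℝ) : ℝ := fderiv ℝ f p (0, 1)

/-- The Jacobi bracket on `ℝ²` associated to the Jacobi-Lie bialgebra
`((A₁, X̃¹),(A₁, X₂))`:
`{f,h} = (1−x−e^{−x})(∂_x f ∂_y h − ∂_y f ∂_x h) + h ∂_y f − f ∂_y h`. -/
noncomputable def jb (f h : ℝ × ℝ → ℝ) : ℝ × ℝ → ℝ := fun p =>
  (1 - p.1 - Real.exp (-p.1)) * (pdx f p * pdy h p - pdy f p * pdx h p)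
    + h p * pdy f p - f p * pdy h p

/-! ### Auxiliary lemmas -/

private lemma pd_add {a b : ℝ × ℝ → ℝ} {p v : ℝ × ℝ}
    (ha : DifferentiableAt ℝ a p) (hb : DifferentiableAt ℝ b p) :
    fderiv ℝ (fun q => a q + b q) p v = fderiv ℝ a p v + fderiv ℝ b p v := by
  rw [fderiv_fun_add ha hb]; rfl

private lemma pd_sub {a b : ℝ × ℝ → ℝ} {p v : ℝ × ℝ}
    (ha : DifferentiableAt ℝ a p) (hb : DifferentiableAt ℝ b p) :
    fderiv ℝ (fun q => a q - b q) p v = fderiv ℝ a p v - fderiv ℝ b p v := by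
  rw [fderiv_fun_sub ha hb]; rfl

private lemma pd_mul {a b : ℝ × ℝ → ℝ} {p v : ℝ × ℝ}
    (ha : DifferentiableAt ℝ a p) (hb : DifferentiableAt ℝ b p) :
    fderiv ℝ (fun q => a q * b q) p v
      = fderiv ℝ a p v * b p + a p * fderiv ℝ b p v := by
  rw [fderiv_fun_mul ha hb]
  simp only [ContinuousLinearMap.add_apply, ContinuousLinearMap.smul_apply, smul_eq_mul]
  ring

private lemma contDiff_pdx {f : ℝ × ℝ → ℝ} (hf : ContDiff ℝ (⊤ : ℕ∞) f) :
    ContDiff ℝ (⊤ : ℕ∞) (pdx f) :=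
  (hf.fderiv_right (by simp)).clm_apply contDiff_const

private lemma contDiff_pdy {f : ℝ × ℝ → ℝ} (hf : ContDiff ℝ (⊤ : ℕ∞) f) :
    ContDiff ℝ (⊤ : ℕ∞) (pdy f) :=
  (hf.fderiv_right (by simp)).clm_apply contDiff_const

private lemma pd_pd {f : ℝ × ℝ → ℝ} (hf : ContDiff ℝ (⊤ : ℕ∞) f) (p v w : ℝ × ℝ) :
    fderiv ℝ (fun q => fderiv ℝ f q w) p v = fderiv ℝ (fderiv ℝ f) p v w := by
  rw [fderiv_clm_apply ((hf.fderiv_right (m := (⊤ : ℕ∞)) (by simp)).differentiable (by simp)).differentiableAt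
    (differentiableAt_const w)]
  simp

private lemma pd_comm {f : ℝ × ℝ → ℝ} (hf : ContDiff ℝ (⊤ : ℕ∞) f) (p v w : ℝ × ℝ) :
    fderiv ℝ (fun q => fderiv ℝ f q w) p v = fderiv ℝ (fun q => fderiv ℝ f q v) p w := by
  rw [pd_pd hf, pd_pd hf,
    (hf.contDiffAt.isSymmSndFDerivAt (by rw [minSmoothness_of_isRCLikeNormedField]; exact WithTop.coe_le_coe.mpr le_top)).eq]

private lemma mixed_comm {f : ℝ × ℝ → ℝ} (hf : ContDiff ℝ (⊤ : ℕ∞) f) (p : ℝ × ℝ) :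
    pdy (pdx f) p = pdx (pdy f) p :=
  pd_comm hf p (0, 1) (1, 0)

private lemma contDiff_phi :
    ContDiff ℝ (⊤ : ℕ∞) (fun q : ℝ × ℝ => 1 - q.1 - Real.exp (-q.1)) :=
  (contDiff_const.sub contDiff_fst).sub (Real.contDiff_exp.comp contDiff_fst.neg)

private lemma pd_phi (p v : ℝ × ℝ) :
    fderiv ℝ (fun q : ℝ × ℝ => 1 - q.1 - Real.exp (-q.1)) p v
      = (Real.exp (-p.1) - 1) * v.1 := by
  have h1 : HasFDerivAt (fun q : ℝ × ℝ => -q.1)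
      (-(ContinuousLinearMap.fst ℝ ℝ ℝ)) p := hasFDerivAt_fst.neg
  have h2 : HasFDerivAt (fun q : ℝ × ℝ => Real.exp (-q.1))
      (Real.exp (-p.1) • (-(ContinuousLinearMap.fst ℝ ℝ ℝ))) p :=
    (Real.hasDerivAt_exp (-p.1)).comp_hasFDerivAt (h₂ := Real.exp) p h1
  have h3 : HasFDerivAt (fun q : ℝ × ℝ => 1 - q.1 - Real.exp (-q.1))
      (((0 : ℝ × ℝ →L[ℝ] ℝ) - ContinuousLinearMap.fst ℝ ℝ ℝ)
        - Real.exp (-p.1) • (-(ContinuousLinearMap.fst ℝ ℝ ℝ))) p :=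
    ((hasFDerivAt_const 1 p).sub hasFDerivAt_fst).sub h2
  rw [h3.fderiv]
  simp only [ContinuousLinearMap.sub_apply, ContinuousLinearMap.zero_apply,
    ContinuousLinearMap.smul_apply, ContinuousLinearMap.neg_apply,
    ContinuousLinearMap.coe_fst', smul_eq_mul]
  ring

private lemma pd_jb {g h : ℝ × ℝ → ℝ} (hg : ContDiff ℝ (⊤ : ℕ∞) g) (hh : ContDiff ℝ (⊤ : ℕ∞) h)
    (p v : ℝ × ℝ) :
    fderiv ℝ (jb g h) p v =
      (Real.exp (-p.1) - 1) * v.1 * (pdx g p * pdy h p - pdy g p * pdx h p)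
      + (1 - p.1 - Real.exp (-p.1)) *
          (fderiv ℝ (pdx g) p v * pdy h p + pdx g p * fderiv ℝ (pdy h) p v
            - fderiv ℝ (pdy g) p v * pdx h p - pdy g p * fderiv ℝ (pdx h) p v)
      + (fderiv ℝ h p v * pdy g p + h p * fderiv ℝ (pdy g) p v)
      - (fderiv ℝ g p v * pdy h p + g p * fderiv ℝ (pdy h) p v) := by
  have Dg : DifferentiableAt ℝ g p := (hg.differentiable (by simp)).differentiableAt
  have Dh : DifferentiableAt ℝ h p := (hh.differentiable (by simp)).differentiableAt
  have Dgx : DifferentiableAt ℝ (pdx g) p :=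
    ((contDiff_pdx hg).differentiable (by simp)).differentiableAt
  have Dgy : DifferentiableAt ℝ (pdy g) p :=
    ((contDiff_pdy hg).differentiable (by simp)).differentiableAt
  have Dhx : DifferentiableAt ℝ (pdx h) p :=
    ((contDiff_pdx hh).differentiable (by simp)).differentiableAt
  have Dhy : DifferentiableAt ℝ (pdy h) p :=
    ((contDiff_pdy hh).differentiable (by simp)).differentiableAt
  have Dphi : DifferentiableAt ℝ (fun q : ℝ × ℝ => 1 - q.1 - Real.exp (-q.1)) p :=
    (contDiff_phi.differentiable (by simp)).differentiableAt
  have DS : DifferentiableAt ℝ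
      (fun q => pdx g q * pdy h q - pdy g q * pdx h q) p :=
    (Dgx.mul Dhy).sub (Dgy.mul Dhx)
  have hS : fderiv ℝ (fun q => pdx g q * pdy h q - pdy g q * pdx h q) p v
      = (fderiv ℝ (pdx g) p v * pdy h p + pdx g p * fderiv ℝ (pdy h) p v)
        - (fderiv ℝ (pdy g) p v * pdx h p + pdy g p * fderiv ℝ (pdx h) p v) := by
    rw [pd_sub (Dgx.fun_mul Dhy) (Dgy.fun_mul Dhx), pd_mul Dgx Dhy, pd_mul Dgy Dhx]
  have hPS : fderiv ℝ (fun q => (1 - q.1 - Real.exp (-q.1))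
      * (pdx g q * pdy h q - pdy g q * pdx h q)) p v
      = (Real.exp (-p.1) - 1) * v.1 * (pdx g p * pdy h p - pdy g p * pdx h p)
        + (1 - p.1 - Real.exp (-p.1)) *
          ((fderiv ℝ (pdx g) p v * pdy h p + pdx g p * fderiv ℝ (pdy h) p v)
            - (fderiv ℝ (pdy g) p v * pdx h p + pdy g p * fderiv ℝ (pdx h) p v)) := by
    rw [pd_mul Dphi DS, pd_phi, hS]
  calc fderiv ℝ (jb g h) p v
      = fderiv ℝ (fun q => ((1 - q.1 - Real.exp (-q.1))
          * (pdx g q * pdy h q - pdy g q * pdx h q) + h q * pdy g q)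
          - g q * pdy h q) p v := rfl
    _ = _ := by
        rw [pd_sub ((Dphi.fun_mul DS).fun_add (Dh.fun_mul Dgy)) (Dg.fun_mul Dhy),
          pd_add (Dphi.fun_mul DS) (Dh.fun_mul Dgy), pd_mul Dh Dgy, pd_mul Dg Dhy, hPS]
        ring

private lemma pdx_jb {g h : ℝ × ℝ → ℝ} (hg : ContDiff ℝ (⊤ : ℕ∞) g) (hh : ContDiff ℝ (⊤ : ℕ∞) h)
    (p : ℝ × ℝ) :
    pdx (jb g h) p =
      (Real.exp (-p.1) - 1) * (pdx g p * pdy h p - pdy g p * pdx h p)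
      + (1 - p.1 - Real.exp (-p.1)) *
          (pdx (pdx g) p * pdy h p + pdx g p * pdx (pdy h) p
            - pdx (pdy g) p * pdx h p - pdy g p * pdx (pdx h) p)
      + (pdx h p * pdy g p + h p * pdx (pdy g) p)
      - (pdx g p * pdy h p + g p * pdx (pdy h) p) := by
  have := pd_jb hg hh p (1, 0)
  simp only [pdx, pdy] at this ⊢
  rw [this]
  norm_num

private lemma pdy_jb {g h : ℝ × ℝ → ℝ} (hg : ContDiff ℝ (⊤ : ℕ∞) g) (hh : ContDiff ℝ (⊤ : ℕ∞) h)
    (p : ℝ × ℝ) :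
    pdy (jb g h) p =
      (1 - p.1 - Real.exp (-p.1)) *
          (pdy (pdx g) p * pdy h p + pdx g p * pdy (pdy h) p
            - pdy (pdy g) p * pdx h p - pdy g p * pdy (pdx h) p)
      + (pdy h p * pdy g p + h p * pdy (pdy g) p)
      - (pdy g p * pdy h p + g p * pdy (pdy h) p) := by
  have := pd_jb hg hh p (0, 1)
  simp only [pdx, pdy] at this ⊢
  rw [this]
  norm_num

/-- The bracket `jb` satisfies the Jacobi identity for all smooth functions. -/
theorem jb_jacobi_identity (f g h : ℝ × ℝ → ℝ)
    (hf : ContDiff ℝ (⊤ : ℕ∞) f) (hg : ContDiff ℝ (⊤ : ℕ∞) g) (hh : ContDiff ℝ (⊤ : ℕ∞) h) (p : ℝ × ℝ) :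
    jb f (jb g h) p + jb g (jb h f) p + jb h (jb f g) p = 0 := by
  have E : ∀ a b : ℝ × ℝ → ℝ, jb a b p
      = (1 - p.1 - Real.exp (-p.1)) * (pdx a p * pdy b p - pdy a p * pdx b p)
        + b p * pdy a p - a p * pdy b p := fun a b => rfl
  rw [E f (jb g h), E g (jb h f), E h (jb f g), E g h, E h f, E f g,
    pdx_jb hg hh p, pdy_jb hg hh p, pdx_jb hh hf p, pdy_jb hh hf p,
    pdx_jb hf hg p, pdy_jb hf hg p,
    mixed_comm hf p, mixed_comm hg p, mixed_comm hh p]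
  ring
end

section
/- Let g be a finite-dimensional real Lie algebra with basis {Xᵢ}, structure constants f_{ij}^k, and let φ₀ = βᵢ X̃ⁱ ∈ g* satisfy dφ₀ = 0, i.e., βᵢ f_{mn}^i = 0 for all m,n. Then the modified bracket {Sᵢ,Sⱼ} := f_{ij}^k S_k + βᵢ Sⱼ − βⱼ Sᵢ on the free vector space spanned by S₁,…,S_n satisfies the Jacobi identity if and only if βᵢ f_{jk}^m + βⱼ f_{ki}^m + β_k f_{ij}^m = 0 for all i,j,k,m. -/
open scoped BigOperators

/-- Let `g` be an `n`-dimensional real Lie algebra with structure constants `f`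
(antisymmetric and satisfying the Jacobi identity), and let `β` be the
components of a 1-cocycle `φ₀` (i.e. `βᵢ f_{mn}^i = 0`).  The modified
Kirillov–Kostant bracket `{Sᵢ,Sⱼ} = f_{ij}^k S_k + βᵢ Sⱼ − βⱼ Sᵢ` (extended
bilinearly to `ℝⁿ`) satisfies the Jacobi identity if and only if
`βᵢ f_{jk}^m + βⱼ f_{ki}^m + β_k f_{ij}^m = 0` for all `i,j,k,m`. -/
theorem modified_kirillov_kostant_jacobi (n : ℕ) (f : Fin n → Fin n → Fin n → ℝ)
    (hanti : ∀ i j k, f i j k = - f j i k)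
    (hjac : ∀ i j k l, ∑ m, (f i j m * f m k l + f j k m * f m i l + f k i m * f m j l) = 0)
    (β : Fin n → ℝ)
    (hcocycle : ∀ m n', ∑ i, β i * f m n' i = 0)
    (B : (Fin n → ℝ) → (Fin n → ℝ) → (Fin n → ℝ))
    (hB : ∀ u v k, B u v k = (∑ i, ∑ j, u i * v j * f i j k)
        + (∑ i, β i * u i) * v k - (∑ j, β j * v j) * u k) :
    (∀ u v w, B u (B v w) + B v (B w u) + B w (B u v) = 0)
      ↔ (∀ i j k m, β i * f j k m + β j * f k i m + β k * f i j m = 0) := by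
  set e : Fin n → (Fin n → ℝ) := fun i => Pi.single i 1 with he
  -- B on basis vectors
  have h1 : ∀ i j k, B (e i) (e j) k = f i j k + β i * e j k - β j * e i k := by
    intro i j k
    rw [hB]
    simp [he, Pi.single_apply]
  -- cocycle vanishing on B of basis vectors
  have h2 : ∀ i j, ∑ b, β b * B (e i) (e j) b = 0 := by
    intro i j
    have h' : ∀ b, β b * B (e i) (e j) b
        = β b * f i j b + β i * (β b * e j b) - β j * (β b * e i b) := by
      intro b; rw [h1]; ring
    rw [Finset.sum_congr rfl fun b _ => h' b]
    rw [Finset.sum_sub_distrib, Finset.sum_add_distrib, ← Finset.mul_sum, ← Finset.mul_sum,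
      hcocycle]
    simp [he, Pi.single_apply, mul_comm]
  -- B (e i) (B (e j) (e k)) explicitly
  have h3 : ∀ i j k m, B (e i) (B (e j) (e k)) m
      = (∑ b, f j k b * f i b m) + β j * f i k m - β k * f i j m
        + β i * f j k m + β i * β j * e k m - β i * β k * e j m := by
    intro i j k m
    rw [hB]
    have hs1 : (∑ a, ∑ b, e i a * B (e j) (e k) b * f a b m)
        = ∑ b, B (e j) (e k) b * f i b m := by
      rw [Finset.sum_comm]
      simp [he, Pi.single_apply]
    have hs2 : (∑ a, β a * e i a) = β i := by simp [he, Pi.single_apply]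
    rw [hs1, hs2, h2]
    have hs3 : (∑ b, B (e j) (e k) b * f i b m)
        = (∑ b, f j k b * f i b m) + β j * (∑ b, e k b * f i b m)
          - β k * (∑ b, e j b * f i b m) := by
      rw [Finset.mul_sum, Finset.mul_sum, ← Finset.sum_add_distrib, ← Finset.sum_sub_distrib]
      refine Finset.sum_congr rfl fun b _ => ?_
      rw [h1]; ring
    rw [hs3]
    have hk : (∑ b, e k b * f i b m) = f i k m := by simp [he, Pi.single_apply]
    have hj : (∑ b, e j b * f i b m) = f i j m := by simp [he, Pi.single_apply]
    rw [hk, hj, h1]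
    ring
  -- Jacobi identity on basis vectors
  have h4 : ∀ i j k m, B (e i) (B (e j) (e k)) m + B (e j) (B (e k) (e i)) m
      + B (e k) (B (e i) (e j)) m
      = -(β i * f j k m + β j * f k i m + β k * f i j m) := by
    intro i j k m
    have hb : (∑ b, f j k b * f i b m) + ((∑ b, f k i b * f j b m)
        + (∑ b, f i j b * f k b m)) = 0 := by
      rw [← Finset.sum_add_distrib, ← Finset.sum_add_distrib]
      have h' : ∀ b, f j k b * f i b m + (f k i b * f j b m + f i j b * f k b m)
          = -(f j k b * f b i m + f k i b * f b j m + f i j b * f b k m) := by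
        intro b
        rw [hanti i b m, hanti j b m, hanti k b m]
        ring
      rw [Finset.sum_congr rfl fun b _ => h' b, Finset.sum_neg_distrib, hjac j k i m,
        neg_zero]
    rw [h3 i j k m, h3 j k i m, h3 k i j m, hanti i k m, hanti j i m, hanti k j m]
    linear_combination hb
  -- bilinear expansion of B through basis vectors
  have h5 : ∀ u v k, B u v k = ∑ a, ∑ b, u a * v b * B (e a) (e b) k := by
    intro u v k
    rw [hB]
    have step : ∀ a, ∑ b, u a * v b * B (e a) (e b) k
        = (∑ b, u a * v b * f a b k) + β a * u a * v k
          - (∑ b, β b * v b) * (u a * e a k) := by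
      intro a
      have h' : ∀ b, u a * v b * B (e a) (e b) k
          = u a * v b * f a b k + β a * u a * (v b * e b k) - β b * v b * (u a * e a k) := by
        intro b; rw [h1]; ring
      rw [Finset.sum_congr rfl fun b _ => h' b, Finset.sum_sub_distrib,
        Finset.sum_add_distrib, ← Finset.mul_sum, ← Finset.sum_mul]
      have : (∑ b, v b * e b k) = v k := by simp [he, Pi.single_apply]
      rw [this]
    rw [Finset.sum_congr rfl fun a _ => step a, Finset.sum_sub_distrib,
      Finset.sum_add_distrib, ← Finset.mul_sum]
    have h1' : (∑ a, β a * u a * v k) = (∑ a, β a * u a) * v k := by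
      rw [Finset.sum_mul]
    have h2' : (∑ a, u a * e a k) = u k := by simp [he, Pi.single_apply]
    rw [h1', h2']
  -- trilinear expansion of the nested bracket
  have h6 : ∀ u v w m, B u (B v w) m
      = ∑ a, ∑ i, ∑ j, u a * v i * w j * B (e a) (B (e i) (e j)) m := by
    have hlef : ∀ (x : Fin n → ℝ) a m, B (e a) x m = ∑ c, x c * B (e a) (e c) m := by
      intro x a m
      rw [h5, Finset.sum_comm]
      refine Finset.sum_congr rfl fun c _ => ?_
      simp [he, Pi.single_apply]
    intro u v w m
    have swap3 : ∀ (g : Fin n → Fin n → Fin n → ℝ),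
        (∑ c, ∑ i, ∑ j, g c i j) = ∑ i, ∑ j, ∑ c, g c i j := by
      intro g
      rw [Finset.sum_comm]
      exact Finset.sum_congr rfl fun i _ => Finset.sum_comm
    rw [h5 u (B v w) m]
    calc ∑ a, ∑ c, u a * B v w c * B (e a) (e c) m
        = ∑ a, ∑ c, ∑ i, ∑ j, u a * v i * w j * (B (e i) (e j) c * B (e a) (e c) m) := by
          refine Finset.sum_congr rfl fun a _ => Finset.sum_congr rfl fun c _ => ?_
          rw [h5 v w c]
          simp only [Finset.mul_sum, Finset.sum_mul]
          refine Finset.sum_congr rfl fun i _ => Finset.sum_congr rfl fun j _ => ?_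
          ring
      _ = ∑ a, ∑ i, ∑ j, ∑ c, u a * v i * w j * (B (e i) (e j) c * B (e a) (e c) m) := by
          exact Finset.sum_congr rfl fun a _ => swap3 _
      _ = ∑ a, ∑ i, ∑ j, u a * v i * w j * B (e a) (B (e i) (e j)) m := by
          refine Finset.sum_congr rfl fun a _ => Finset.sum_congr rfl fun i _ =>
            Finset.sum_congr rfl fun j _ => ?_
          rw [hlef (B (e i) (e j)) a m, Finset.mul_sum]
  constructor
  · intro hJ i j k m
    have := congrFun (hJ (e i) (e j) (e k)) m
    simp only [Pi.add_apply, Pi.zero_apply] at this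
    rw [h4] at this
    linarith
  · intro hc u v w
    have rot3 : ∀ (g : Fin n → Fin n → Fin n → ℝ),
        (∑ p, ∑ q, ∑ r, g p q r) = ∑ r, ∑ p, ∑ q, g p q r := by
      intro g
      rw [show (∑ p, ∑ q, ∑ r, g p q r) = ∑ p, ∑ r, ∑ q, g p q r from
        Finset.sum_congr rfl fun p _ => Finset.sum_comm, Finset.sum_comm]
    funext m
    simp only [Pi.add_apply, Pi.zero_apply]
    rw [h6 u v w m, h6 v w u m, h6 w u v m,
      rot3 (fun p q r => v p * w q * u r * B (e p) (B (e q) (e r)) m),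
      rot3 (fun p q r => w p * u q * v r * B (e p) (B (e q) (e r)) m),
      rot3 (fun r p q => w p * u q * v r * B (e p) (B (e q) (e r)) m)]
    rw [← Finset.sum_add_distrib, ← Finset.sum_add_distrib]
    rw [show (0:ℝ) = ∑ a : Fin n, ∑ i : Fin n, ∑ j : Fin n, (0:ℝ) by simp]
    refine Finset.sum_congr rfl fun a _ => ?_
    rw [← Finset.sum_add_distrib, ← Finset.sum_add_distrib]
    refine Finset.sum_congr rfl fun i _ => ?_
    rw [← Finset.sum_add_distrib, ← Finset.sum_add_distrib]
    refine Finset.sum_congr rfl fun j _ => ?_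
    have := h4 a i j m
    calc u a * v i * w j * B (e a) (B (e i) (e j)) m
          + v i * w j * u a * B (e i) (B (e j) (e a)) m
          + w j * u a * v i * B (e j) (B (e a) (e i)) m
        = u a * v i * w j * (B (e a) (B (e i) (e j)) m
            + B (e i) (B (e j) (e a)) m + B (e j) (B (e a) (e i)) m) := by ring
      _ = 0 := by rw [h4 a i j m, hc a i j m, neg_zero, mul_zero]
end

section
/- For the Lie algebra VI₀ with nonzero brackets [X₁,X₃] = X₂, [X₂,X₃] = X₁, the element r = X₁∧X₃ + X₂∧X₃ with X₀ = −X₁ − X₂ satisfies [r,r] = 2·X₀∧r, so the pair (r, X₀) is an algebraic Jacobi structure on VI₀. -/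
open scoped BigOperators

/-- The Levi-Civita symbol on `Fin 3`: the coefficient of `X_i∧X_j∧X_k`
with respect to the volume element `X₁∧X₂∧X₃`. -/
def eps (i j k : Fin 3) : ℝ :=
  Matrix.det (Matrix.of ![(Pi.single i 1 : Fin 3 → ℝ), Pi.single j 1, Pi.single k 1])

/-- Coefficient (w.r.t. `X₁∧X₂∧X₃`) of the Schouten–Nijenhuis bracket `[P,Q]`
of two bivectors `P = ½P^{ab}X_a∧X_b`, `Q = ½Q^{cd}X_c∧X_d` on a Lie algebra
with structure constants `f`: `[P,Q] = P^{ab}Q^{cd} f_{ac}^e X_e∧X_b∧X_d`. -/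
def schouten (f : Fin 3 → Fin 3 → Fin 3 → ℝ) (P Q : Matrix (Fin 3) (Fin 3) ℝ) : ℝ :=
  ∑ a, ∑ b, ∑ c, ∑ d, ∑ e, P a b * Q c d * f a c e * eps e b d

/-- Coefficient of the trivector `X₀ ∧ r` for a vector `x` and a bivector
`r = ½ r^{bd} X_b∧X_d`. -/
noncomputable def wedgeVec (x : Fin 3 → ℝ) (P : Matrix (Fin 3) (Fin 3) ℝ) : ℝ :=
  (1 / 2) * ∑ a, ∑ b, ∑ d, x a * P b d * eps a b d

/-- Components of the Schouten bracket `[X₀, r]` of a vector with a bivector. -/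
def lieVecBiv (f : Fin 3 → Fin 3 → Fin 3 → ℝ) (x : Fin 3 → ℝ)
    (P : Matrix (Fin 3) (Fin 3) ℝ) : Matrix (Fin 3) (Fin 3) ℝ :=
  Matrix.of fun i j => ∑ a, ∑ b, x a * (f a b i * P b j - f a b j * P b i)

/-- Structure constants of the Lie algebra `VI₀`:
`[X₁,X₃] = X₂`, `[X₂,X₃] = X₁`. -/
def fVI0 : Fin 3 → Fin 3 → Fin 3 → ℝ :=
  ![![![0,0,0], ![0,0,0], ![0,1,0]],
    ![![0,0,0], ![0,0,0], ![1,0,0]],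
    ![![0,-1,0], ![-1,0,0], ![0,0,0]]]

/-!
Writing `Y = X₁ + X₂`, the bivector `r = Y ∧ X₃` is decomposable and `X₀ = -Y`. For a decomposable
bivector `u ∧ v` the Schouten bracket `[u ∧ v, u ∧ v]` is the triple product of
`[u, v] - [v, u] = 2 [u, v]` with `u` and `v`, and `x ∧ u ∧ v` is the triple product of `x`, `u`,
`v`. In `VI₀` one has `[Y, X₃] = Y`, so both sides of `[r, r] = 2 X₀ ∧ r` contain `Y` twice and vanish.
-/

open Matrix

theorem sum_mul_eps (g : Fin 3 → Fin 3 → Fin 3 → ℝ) :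
    ∑ i, ∑ j, ∑ k, g i j k * eps i j k =
      g 0 1 2 - g 0 2 1 - g 1 0 2 + g 1 2 0 + g 2 0 1 - g 2 1 0 := by
  simp only [eps, Fin.sum_univ_three, det_fin_three, of_apply, cons_val', cons_val_fin_one,
    cons_val_zero, cons_val_one, cons_val, Pi.single_apply, Fin.reduceEq, ↓reduceIte]
  ring

/-- The coefficient matrix of `u ∧ v` in the convention `½ P^{ab} X_a ∧ X_b`. -/
def wedge (u v : Fin 3 → ℝ) : Matrix (Fin 3) (Fin 3) ℝ :=
  vecMulVec u v - vecMulVec v u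

def structBracket (f : Fin 3 → Fin 3 → Fin 3 → ℝ) (u v : Fin 3 → ℝ) : Fin 3 → ℝ :=
  fun e => ∑ a, ∑ c, u a * v c * f a c e

theorem wedgeVec_wedge (x u v : Fin 3 → ℝ) : wedgeVec x (wedge u v) = x ⬝ᵥ u ⨯₃ v := by
  simp only [wedgeVec, sum_mul_eps]
  simp only [wedge, Matrix.sub_apply, vecMulVec_apply, dotProduct, cross_apply, Fin.sum_univ_three,
    cons_val_zero, cons_val_one, cons_val]
  ring

theorem schouten_eq_sum_mul_eps (f : Fin 3 → Fin 3 → Fin 3 → ℝ)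
    (P Q : Matrix (Fin 3) (Fin 3) ℝ) :
    schouten f P Q = ∑ e, ∑ b, ∑ d, (∑ a, ∑ c, P a b * Q c d * f a c e) * eps e b d := by
  simp only [schouten, Finset.sum_mul]
  rw [Finset.sum_congr rfl fun a _ => Finset.sum_congr rfl fun b _ => Finset.sum_comm_cycle,
    Finset.sum_comm_cycle]
  refine Finset.sum_congr rfl fun e _ => ?_
  rw [Finset.sum_comm]
  exact Finset.sum_congr rfl fun b _ => Finset.sum_comm_cycle

theorem schouten_wedge_self (f : Fin 3 → Fin 3 → Fin 3 → ℝ) (u v : Fin 3 → ℝ) :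
    schouten f (wedge u v) (wedge u v) =
      (structBracket f u v - structBracket f v u) ⬝ᵥ u ⨯₃ v := by
  rw [schouten_eq_sum_mul_eps, sum_mul_eps]
  simp only [wedge, structBracket, Matrix.sub_apply, Pi.sub_apply, vecMulVec_apply, dotProduct,
    cross_apply, Fin.sum_univ_three, cons_val_zero, cons_val_one, cons_val]
  ring

/-- In the Lie algebra `VI₀`, the element `r = X₁∧X₃ + X₂∧X₃` with
`X₀ = −X₁ − X₂` satisfies `[r,r] = 2·X₀∧r`, so `(r, X₀)` is an algebraic
Jacobi structure on `VI₀`. -/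
theorem VI0_algebraic_jacobi :
    schouten fVI0 !![0,0,1; 0,0,1; -1,-1,0] !![0,0,1; 0,0,1; -1,-1,0]
      = 2 * wedgeVec ![-1,-1,0] !![0,0,1; 0,0,1; -1,-1,0] := by
  have hr : !![0,0,1; 0,0,1; -1,-1,0] = wedge ![1,1,0] ![0,0,1] := by
    ext i j
    fin_cases i <;> fin_cases j <;> simp [wedge]
  have hYX₃ : structBracket fVI0 ![1,1,0] ![0,0,1] = ![1,1,0] := by
    ext e
    fin_cases e <;> simp [structBracket, fVI0, Fin.sum_univ_three]
  have hX₃Y : structBracket fVI0 ![0,0,1] ![1,1,0] = -![1,1,0] := by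
    ext e
    fin_cases e <;> simp [structBracket, fVI0, Fin.sum_univ_three]
  have hX₀ : (![-1,-1,0] : Fin 3 → ℝ) = -![1,1,0] := by simp
  rw [hr, schouten_wedge_self, wedgeVec_wedge, hYX₃, hX₃Y, hX₀, sub_neg_eq_add, add_dotProduct,
    neg_dotProduct, dot_self_cross]
  simp
end
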